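/- arXiv:2208.03843 — 3 statements merged into one kernel-verified Lean document; each statement's English description precedes it below -/
import Mathlib

section
/- Counterfactual fairness implies demographic parity: suppose for every observation (x, a) with positive probability and every outcome y, the conditional probability P(Ŷ_{A←a} = y | X = x, A = a) equals P(Ŷ_{A←a'} = y | X = x, A = a) for all a'. Suppose further that for each intervention value a, the distribution of Ŷ_{A←a} given (X = x, A = a) depends only on the posterior of the latent variable U, and that U is independent of A. Then the induced predictor Ŷ(x, a) := Ŷ_{A←a}(U(x,a)) satisfies demographic parity: its conditional distribution given A = a is the same for every a. -/
open MeasureTheory ProbabilityTheory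

/-- Counterfactual fairness implies demographic parity: if the counterfactual
predictor `Yhat b ∘ U` has the same conditional distribution given `(X = x, A = a)`
for every intervention value `b`, the predictor depends on the latent variable `U`
only, and `U` is independent of `A`, then the induced predictor
`ω ↦ Yhat (A ω) (U ω)` satisfies demographic parity. -/
theorem counterfactual_fairness_implies_demographic_parity
    {Ω χ α υ Y : Type*} [Fintype Ω] [Fintype χ] [Fintype α] [Fintype υ] [Fintype Y]
    [MeasurableSpace Ω] [MeasurableSingletonClass Ω]
    (μ : Measure Ω) [IsProbabilityMeasure μ]
    (X : Ω → χ) (A : Ω → α) (U : Ω → υ) (Yhat : α → υ → Y)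
    (hCF : ∀ (x : χ) (a a' : α) (y : Y),
      μ ({ω | X ω = x} ∩ {ω | A ω = a}) ≠ 0 →
      μ[|({ω | X ω = x} ∩ {ω | A ω = a})] {ω | Yhat a (U ω) = y} =
        μ[|({ω | X ω = x} ∩ {ω | A ω = a})] {ω | Yhat a' (U ω) = y})
    (hUA : ∀ (u : υ) (a : α),
      μ ({ω | U ω = u} ∩ {ω | A ω = a}) = μ {ω | U ω = u} * μ {ω | A ω = a}) :
    ∀ (a a' : α) (y : Y), μ {ω | A ω = a} ≠ 0 → μ {ω | A ω = a'} ≠ 0 →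
      μ[|{ω | A ω = a}] {ω | Yhat a (U ω) = y} =
        μ[|{ω | A ω = a'}] {ω | Yhat a' (U ω) = y} := by
  classical
  have hms : ∀ s : Set Ω, MeasurableSet s := fun s => (Set.toFinite s).measurableSet
  have hfin : ∀ s : Set Ω, μ s ≠ ⊤ := fun s => measure_ne_top μ s
  -- decomposition over values of U
  have hsum : ∀ (b : α) (y : Y) (S : Set Ω),
      μ ({ω | Yhat b (U ω) = y} ∩ S)
        = ∑ u ∈ Finset.univ.filter (fun u => Yhat b u = y), μ ({ω | U ω = u} ∩ S) := by
    intro b y S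
    rw [← measure_biUnion_finset]
    · congr 1
      ext ω
      constructor
      · rintro ⟨h1, h2⟩
        exact Set.mem_biUnion (Finset.mem_filter.mpr ⟨Finset.mem_univ _, h1⟩) ⟨rfl, h2⟩
      · rintro ⟨_, ⟨u, rfl⟩, hu⟩
        simp only [Finset.mem_coe, Finset.mem_filter, Set.mem_iUnion, Set.mem_inter_iff,
          Set.mem_setOf_eq, exists_prop] at hu
        obtain ⟨⟨_, h1⟩, h2, h3⟩ := hu
        exact ⟨by rw [Set.mem_setOf_eq, h2, h1], h3⟩
    · intro u _ v _ huv
      simp only [Function.onFun, Set.disjoint_left, Set.mem_inter_iff, Set.mem_setOf_eq]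
      rintro ω ⟨h1, _⟩ ⟨h2, _⟩
      exact huv (h1 ▸ h2 ▸ rfl)
    · intro u _; exact hms _
  -- independence of the predictor and A
  have hindep : ∀ (b : α) (y : Y) (a : α),
      μ ({ω | Yhat b (U ω) = y} ∩ {ω | A ω = a})
        = μ {ω | Yhat b (U ω) = y} * μ {ω | A ω = a} := by
    intro b y a
    have h2 := hsum b y Set.univ
    simp only [Set.inter_univ] at h2
    rw [hsum b y {ω | A ω = a}, h2, Finset.sum_mul]
    exact Finset.sum_congr rfl fun u _ => hUA u a
  -- decomposition over values of X
  have hpart : ∀ (b : α) (y : Y) (a : α),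
      μ ({ω | Yhat b (U ω) = y} ∩ {ω | A ω = a})
        = ∑ x : χ, μ ({ω | Yhat b (U ω) = y} ∩ ({ω | X ω = x} ∩ {ω | A ω = a})) := by
    intro b y a
    rw [← measure_biUnion_finset]
    · congr 1
      ext ω
      constructor
      · rintro ⟨h1, h2⟩
        exact Set.mem_biUnion (Finset.mem_univ (X ω)) ⟨h1, rfl, h2⟩
      · rintro ⟨_, ⟨x, rfl⟩, hu⟩
        simp only [Set.mem_iUnion, Set.mem_inter_iff, Set.mem_setOf_eq, exists_prop] at hu
        obtain ⟨_, h1, _, h3⟩ := hu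
        exact ⟨h1, h3⟩
    · intro x _ z _ hxz
      simp only [Function.onFun, Set.disjoint_left, Set.mem_inter_iff, Set.mem_setOf_eq]
      rintro ω ⟨_, h1, _⟩ ⟨_, h2, _⟩
      exact hxz (h1 ▸ h2 ▸ rfl)
    · intro x _; exact hms _
  intro a a' y ha ha'
  -- key: the unconditional distributions of the two counterfactual predictors agree
  have hkey : μ {ω | Yhat a (U ω) = y} = μ {ω | Yhat a' (U ω) = y} := by
    have hjoint : μ ({ω | Yhat a (U ω) = y} ∩ {ω | A ω = a})
        = μ ({ω | Yhat a' (U ω) = y} ∩ {ω | A ω = a}) := by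
      rw [hpart a y a, hpart a' y a]
      refine Finset.sum_congr rfl fun x _ => ?_
      by_cases hx : μ ({ω | X ω = x} ∩ {ω | A ω = a}) = 0
      · rw [measure_mono_null Set.inter_subset_right hx,
          measure_mono_null Set.inter_subset_right hx]
      · have h := hCF x a a' y hx
        rw [cond_apply (hms _), cond_apply (hms _)] at h
        have h2 := congrArg (μ ({ω | X ω = x} ∩ {ω | A ω = a}) * ·) h
        simp only [← mul_assoc, ENNReal.mul_inv_cancel hx (hfin _), one_mul] at h2
        rw [Set.inter_comm, h2, Set.inter_comm]
    rw [hindep, hindep] at hjoint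
    have h2 := congrArg (· * (μ {ω | A ω = a})⁻¹) hjoint
    simpa only [mul_assoc, ENNReal.mul_inv_cancel ha (hfin _), mul_one] using h2
  rw [cond_apply (hms _), cond_apply (hms _), Set.inter_comm {ω | A ω = a},
    Set.inter_comm {ω | A ω = a'}, hindep, hindep, hkey,
    mul_comm (μ {ω | Yhat a' (U ω) = y}) (μ {ω | A ω = a}),
    mul_comm (μ {ω | Yhat a' (U ω) = y}) (μ {ω | A ω = a'}),
    ← mul_assoc, ← mul_assoc, ENNReal.inv_mul_cancel ha (hfin _),
    ENNReal.inv_mul_cancel ha' (hfin _)]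
end

section
/- Theorem 1 (demographic parity implies counterfactual fairness under trivial latent construction): let Ŷ' : χ × α → Y be a deterministic predictor satisfying demographic parity with respect to (X, A). Define the latent variable U := Ŷ'(X, A) and the counterfactual predictor Ŷ_{A←a}(u) := u (the identity, ignoring the intervention). Then (i) U is independent of A, and (ii) the predictor is counterfactually fair: for all x, a, a', y with P(X=x, A=a) > 0, P(Ŷ_{A←a}(U) = y | X=x, A=a) = P(Ŷ_{A←a'}(U) = y | X=x, A=a). -/
/-!
By the law of total probability, an event whose conditional probability given `A = a` does not
depend on `a` has that common value as its probability, and this is independence from `A`.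
Counterfactual fairness is immediate, since the identity predictor ignores the intervention.
-/

open MeasureTheory ProbabilityTheory

namespace ProbabilityTheory

variable {Ω α : Type*} [MeasurableSpace Ω] [Fintype α] [MeasurableSpace α]
  [DiscreteMeasurableSpace α] {μ : Measure Ω} [IsProbabilityMeasure μ] {X : Ω → α} {s : Set Ω}

lemma measure_eq_of_cond_fiber_eq (hX : Measurable X) {c : ENNReal}
    (h : ∀ x, μ (X ⁻¹' {x}) ≠ 0 → μ[s | X ← x] = c) : μ s = c := by
  have hfiber : ∀ x, μ[s | X ← x] * μ (X ⁻¹' {x}) = c * μ (X ⁻¹' {x}) := by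
    intro x
    by_cases hx : μ (X ⁻¹' {x}) = 0
    · simp [hx]
    · rw [h x hx]
  calc μ s = ∑ x, μ[s | X ← x] * μ (X ⁻¹' {x}) := by
        conv_lhs => rw [← sum_meas_smul_cond_fiber hX μ]
        simp [mul_comm]
    _ = c * ∑ x, μ (X ⁻¹' {x}) := by simp only [hfiber, Finset.mul_sum]
    _ = c := by rw [sum_measure_preimage_singleton _ fun x _ ↦ hX (.singleton x)]; simp

lemma measure_inter_preimage_eq_mul_of_cond_fiber_eq (hX : Measurable X)
    (h : ∀ x x', μ (X ⁻¹' {x}) ≠ 0 → μ (X ⁻¹' {x'}) ≠ 0 → μ[s | X ← x] = μ[s | X ← x'])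
    (x : α) : μ (s ∩ X ⁻¹' {x}) = μ s * μ (X ⁻¹' {x}) := by
  by_cases hx : μ (X ⁻¹' {x}) = 0
  · simp [hx, measure_inter_null_of_null_right]
  · have hs : μ s = μ[s | X ← x] :=
      measure_eq_of_cond_fiber_eq hX fun x' hx' ↦ (h x x' hx hx').symm
    rw [hs, cond_mul_eq_inter (hX (.singleton x)), Set.inter_comm]

end ProbabilityTheory

theorem demographic_parity_implies_counterfactual_fairness_general
    {Ω χ α Y : Type*} [Fintype Ω] [Fintype α]
    [MeasurableSpace Ω] [MeasurableSingletonClass Ω]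
    (μ : Measure Ω) [IsProbabilityMeasure μ]
    (X : Ω → χ) (A : Ω → α) (Yhat' : χ × α → Y)
    (hDP : ∀ (y : Y) (a a' : α), μ {ω | A ω = a} ≠ 0 → μ {ω | A ω = a'} ≠ 0 →
      μ[|{ω | A ω = a}] {ω | Yhat' (X ω, A ω) = y} =
        μ[|{ω | A ω = a'}] {ω | Yhat' (X ω, A ω) = y}) :
    -- the latent variable `U := Ŷ'(X, A)` and identity predictor `Ŷ_{A←a} := id`
    (∀ (u : Y) (a : α),
      μ ({ω | Yhat' (X ω, A ω) = u} ∩ {ω | A ω = a}) =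
        μ {ω | Yhat' (X ω, A ω) = u} * μ {ω | A ω = a}) ∧
    (∀ (x : χ) (a a' : α) (y : Y),
      μ ({ω | X ω = x} ∩ {ω | A ω = a}) ≠ 0 →
      μ[|({ω | X ω = x} ∩ {ω | A ω = a})]
          {ω | (fun u => u) (Yhat' (X ω, A ω)) = y} =
        μ[|({ω | X ω = x} ∩ {ω | A ω = a})]
          {ω | (fun u => u) (Yhat' (X ω, A ω)) = y}) := by
  let _ : MeasurableSpace α := ⊤
  exact ⟨fun u ↦ measure_inter_preimage_eq_mul_of_cond_fiber_eq .of_discrete (hDP u),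
    fun _ _ _ _ _ ↦ rfl⟩

/-- Theorem 1: a deterministic predictor `Ŷ'` satisfying demographic parity can be
turned into a counterfactually fair predictor by taking the latent variable
`U := Ŷ'(X, A)` and the identity counterfactual predictor `Ŷ_{A←a}(u) := u`.
Then (i) `U` is independent of `A`, and (ii) the identity predictor is
counterfactually fair. -/
theorem demographic_parity_implies_counterfactual_fairness
    {Ω χ α Y : Type*} [Fintype Ω] [Fintype χ] [Fintype α] [Fintype Y]
    [MeasurableSpace Ω] [MeasurableSingletonClass Ω]
    (μ : Measure Ω) [IsProbabilityMeasure μ]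
    (X : Ω → χ) (A : Ω → α) (Yhat' : χ × α → Y)
    (hDP : ∀ (y : Y) (a a' : α), μ {ω | A ω = a} ≠ 0 → μ {ω | A ω = a'} ≠ 0 →
      μ[|{ω | A ω = a}] {ω | Yhat' (X ω, A ω) = y} =
        μ[|{ω | A ω = a'}] {ω | Yhat' (X ω, A ω) = y}) :
    -- the latent variable `U := Ŷ'(X, A)` and identity predictor `Ŷ_{A←a} := id`
    (∀ (u : Y) (a : α),
      μ ({ω | Yhat' (X ω, A ω) = u} ∩ {ω | A ω = a}) =
        μ {ω | Yhat' (X ω, A ω) = u} * μ {ω | A ω = a}) ∧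
    (∀ (x : χ) (a a' : α) (y : Y),
      μ ({ω | X ω = x} ∩ {ω | A ω = a}) ≠ 0 →
      μ[|({ω | X ω = x} ∩ {ω | A ω = a})]
          {ω | (fun u => u) (Yhat' (X ω, A ω)) = y} =
        μ[|({ω | X ω = x} ∩ {ω | A ω = a})]
          {ω | (fun u => u) (Yhat' (X ω, A ω)) = y}) :=
  demographic_parity_implies_counterfactual_fairness_general μ X A Yhat' hDP
end

section
/- Proposition (counterfactual fairness can fail to preserve within-group ordering): there exists a probability space, a binary protected attribute A, a binary latent variable assignment (u_Teal, u_Lucas) with u_Lucas = 1 − u_Teal and u_Teal uniform on {0,1}, and a predictor family Ŷ_{A←short}(u) = u, Ŷ_{A←tall}(u) = 1 − u, such that (i) for each individual, the distribution of the counterfactual outcome is the same under both interventions (counterfactual fairness), (ii) each individual's latent variable is independent of a uniformly random binary protected attribute, yet (iii) the relative ordering of the two individuals' outcomes is reversed between the two interventions in every realization: Ŷ_{A←short}(u_Teal) < Ŷ_{A←short}(u_Lucas) if and only if Ŷ_{A←tall}(u_Teal) > Ŷ_{A←tall}(u_Lucas). -/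
open MeasureTheory ProbabilityTheory

lemma meas_eq (s : Set (Bool × Bool)) :
    (PMF.uniformOfFintype (Bool × Bool)).toMeasure s
      = ∑ ω : Bool × Bool, s.indicator (fun _ => (4:ENNReal)⁻¹) ω := by
  rw [PMF.toMeasure_apply_fintype]
  congr 1; ext ω
  simp [Set.indicator, PMF.uniformOfFintype_apply]

lemma two_mul_inv_four : (2:ENNReal) * 4⁻¹ = 2⁻¹ := by
  rw [show (4:ENNReal) = 2*2 by norm_num,
    ENNReal.mul_inv (by norm_num) (by norm_num), ← mul_assoc,
    ENNReal.mul_inv_cancel (two_ne_zero) (by norm_num), one_mul]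

lemma quarter_eq : (4:ENNReal)⁻¹ = 2⁻¹ * 2⁻¹ := by
  rw [← ENNReal.mul_inv (by norm_num) (by norm_num)]
  norm_num

/-- Counterfactual fairness can fail to preserve within-group ordering: on the
uniform space over `(W, A)` (world bit, binary height), there are latent variables
`u_Teal = W`, `u_Lucas = 1 − W` and predictors `Ŷ_short(u) = u`, `Ŷ_tall(u) = 1 − u`
such that (i) each individual's counterfactual outcome has the same distribution
under both interventions, (ii) each individual's latent variable is independent of
the protected attribute, yet (iii) the relative ordering of the two individuals'
outcomes is reversed between the two interventions in every realization. -/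
theorem counterfactual_fairness_not_order_preserving :
    ∃ (uTeal uLucas : Bool × Bool → ℕ) (Yshort Ytall : ℕ → ℕ),
      let μ : Measure (Bool × Bool) := (PMF.uniformOfFintype (Bool × Bool)).toMeasure
      let A : Bool × Bool → Bool := fun ω => ω.2
      -- the construction: `u_Teal` is the world bit, `u_Lucas = 1 − u_Teal`,
      -- `Ŷ_short = id`, `Ŷ_tall(u) = 1 − u`
      uTeal = (fun ω => if ω.1 then 1 else 0) ∧
      uLucas = (fun ω => 1 - uTeal ω) ∧
      Yshort = (fun u => u) ∧
      Ytall = (fun u => 1 - u) ∧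
      -- (i) counterfactual fairness for each individual
      (∀ y : ℕ, μ {ω | Yshort (uTeal ω) = y} = μ {ω | Ytall (uTeal ω) = y}) ∧
      (∀ y : ℕ, μ {ω | Yshort (uLucas ω) = y} = μ {ω | Ytall (uLucas ω) = y}) ∧
      -- (ii) independence of the latent variables from the protected attribute
      (∀ (u : ℕ) (a : Bool),
        μ ({ω | uTeal ω = u} ∩ {ω | A ω = a}) =
          μ {ω | uTeal ω = u} * μ {ω | A ω = a}) ∧
      (∀ (u : ℕ) (a : Bool),
        μ ({ω | uLucas ω = u} ∩ {ω | A ω = a}) =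
          μ {ω | uLucas ω = u} * μ {ω | A ω = a}) ∧
      -- (iii) the within-group ordering flips with the intervention, in every world
      (∀ ω : Bool × Bool,
        Yshort (uTeal ω) < Yshort (uLucas ω) ↔ Ytall (uTeal ω) > Ytall (uLucas ω)) := by
  refine ⟨_, _, _, _, rfl, rfl, rfl, rfl, ?_, ?_, ?_, ?_, ?_⟩
  · intro y
    rw [meas_eq, meas_eq]
    rcases y with _|_|n <;>
      simp [Set.indicator_apply, Fintype.sum_prod_type]
  · intro y
    rw [meas_eq, meas_eq]
    rcases y with _|_|n <;>
      simp [Set.indicator_apply, Fintype.sum_prod_type]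
  · intro u a
    rw [meas_eq, meas_eq, meas_eq]
    rcases u with _|_|n <;> cases a <;>
      simp [Set.indicator_apply, Fintype.sum_prod_type] <;>
      rw [← two_mul, two_mul_inv_four] <;> exact quarter_eq
  · intro u a
    rw [meas_eq, meas_eq, meas_eq]
    rcases u with _|_|n <;> cases a <;>
      simp [Set.indicator_apply, Fintype.sum_prod_type] <;>
      rw [← two_mul, two_mul_inv_four] <;> exact quarter_eq
  · rintro ⟨b, c⟩; cases b <;> simp
end
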